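/- Let K be a metric space and f : K → ℂ a bounded function of finite Baire index, with n = i_B(f). Then f ∈ D(K) and osc_n f = osc_{n+1} f. In particular, if f is real-valued, then ‖f‖_D ≤ (2n+1)‖f‖_∞ and ‖f‖_{qD} ≤ n‖osc f‖_∞ ≤ 2n‖f‖_∞. -/

import Mathlib

open Filter Set Topology ENNReal

noncomputable section

universe u v

/-- The `ℓ¹`-type bound `sup_k Σ_j |φ_j(k)|` of a sequence of functions, in `ℝ≥0∞`. -/
def DBound {K : Type u} [MetricSpace K] (φ : ℕ → K → ℂ) : ℝ≥0∞ :=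
  ⨆ k : K, ∑' j : ℕ, (‖φ j k‖₊ : ℝ≥0∞)

/-- `φ` is a sequence of continuous functions summing pointwise to `f`. -/
def IsDRep {K : Type u} [MetricSpace K] (f : K → ℂ) (φ : ℕ → K → ℂ) : Prop :=
  (∀ j, Continuous (φ j)) ∧ ∀ k, HasSum (fun j => φ j k) (f k)

/-- `f` belongs to `D(K)`: it has a representing sequence with finite bound. -/
def MemD {K : Type u} [MetricSpace K] (f : K → ℂ) : Prop :=
  ∃ φ : ℕ → K → ℂ, IsDRep f φ ∧ DBound φ < ⊤

/-- The `D`-norm of `f`, equal to `⊤` when `f ∉ D(K)`. -/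
def DNorm {K : Type u} [MetricSpace K] (f : K → ℂ) : ℝ≥0∞ :=
  ⨅ (φ : ℕ → K → ℂ) (_ : IsDRep f φ), DBound φ

/-- The quotient `D`-seminorm: distance in `D`-norm to the bounded continuous functions. -/
def qDNorm {K : Type u} [MetricSpace K] (f : K → ℂ) : ℝ≥0∞ :=
  ⨅ (φ : K → ℂ) (_ : Continuous φ ∧ ∃ C : ℝ, ∀ k, ‖φ k‖ ≤ C), DNorm (f - φ)

/-- Upper semicontinuous envelope of `g`, computed relative to the subspace `L`. -/
def uscEnvWithin {K : Type u} [MetricSpace K] (L : Set K) (g : K → ℝ≥0∞) (x : K) : ℝ≥0∞ :=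
  ⨅ U ∈ 𝓝 x, ⨆ y ∈ U ∩ L, g y

/-- `limsup_{y→x, y ∈ L} (|f(y) - f(x)| + g(y))` (non-exclusive limsup, relative to `L`). -/
def toscSuccWithin {K : Type u} [MetricSpace K] (f : K → ℂ) (L : Set K)
    (g : K → ℝ≥0∞) (x : K) : ℝ≥0∞ :=
  ⨅ U ∈ 𝓝 x, ⨆ y ∈ U ∩ L, ((‖f y - f x‖₊ : ℝ≥0∞) + g y)

/-- The finite oscillations `osc_n (f|_L)` of `f` restricted to `L`. -/
def oscNWithin {K : Type u} [MetricSpace K] (f : K → ℂ) (L : Set K) : ℕ → K → ℝ≥0∞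
  | 0 => fun _ => 0
  | n + 1 => uscEnvWithin L (toscSuccWithin f L (oscNWithin f L n))

/-- The oscillation `osc (f|_L)` of `f` restricted to `L`. -/
def oscWithin {K : Type u} [MetricSpace K] (f : K → ℂ) (L : Set K) : K → ℝ≥0∞ :=
  oscNWithin f L 1

/-- The finite oscillations `osc_n f`. -/
def oscN {K : Type u} [MetricSpace K] (f : K → ℂ) (n : ℕ) : K → ℝ≥0∞ :=
  oscNWithin f Set.univ n

/-- `osc_ω (f|_L)`: the usc envelope (relative to `L`) of `sup_n osc_n (f|_L)`. -/
def oscOmegaWithin {K : Type u} [MetricSpace K] (f : K → ℂ) (L : Set K) : K → ℝ≥0∞ :=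
  uscEnvWithin L (fun x => ⨆ n : ℕ, oscNWithin f L n x)

/-- `osc_ω f`. -/
def oscOmega {K : Type u} [MetricSpace K] (f : K → ℂ) : K → ℝ≥0∞ :=
  oscOmegaWithin f Set.univ

/-- `osc_{ω+1} (f|_L)`. -/
def oscOmegaSuccWithin {K : Type u} [MetricSpace K] (f : K → ℂ) (L : Set K) : K → ℝ≥0∞ :=
  uscEnvWithin L (toscSuccWithin f L (oscOmegaWithin f L))

/-- The oscillation sets `os_n(f, (ε_i))` (here `ε : ℕ → ℝ` is 0-indexed, so `ε 0 = ε_1`). -/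
def osSets {K : Type u} [MetricSpace K] (f : K → ℂ) (ε : ℕ → ℝ) : ℕ → Set K
  | 0 => Set.univ
  | n + 1 => {x ∈ osSets f ε n | ENNReal.ofReal (ε n) ≤ oscWithin f (osSets f ε n) x}

/-- The `ε`-Baire index `i_B(f, ε) = sup {n : os_n(f,ε) ≠ ∅} ∈ ℕ∞`. -/
def baireIndexE {K : Type u} [MetricSpace K] (f : K → ℂ) (ε : ℝ) : ℕ∞ :=
  ⨆ (n : ℕ) (_ : (osSets f (fun _ => ε) n).Nonempty), (n : ℕ∞)

/-- The Baire index `i_B(f) = sup_{ε > 0} i_B(f,ε)`. -/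
def baireIndexTotal {K : Type u} [MetricSpace K] (f : K → ℂ) : ℕ∞ :=
  ⨆ (ε : ℝ) (_ : 0 < ε), baireIndexE f ε

/-- The sets `os_n(f, ω, ε)` defined using `osc_ω` of successive restrictions. -/
def osOmegaSets {K : Type u} [MetricSpace K] (f : K → ℂ) (ε : ℝ≥0∞) : ℕ → Set K
  | 0 => Set.univ
  | n + 1 => {x ∈ osOmegaSets f ε n | ε ≤ oscOmegaWithin f (osOmegaSets f ε n) x}

/-- The index `i(f, ω, ε)`, valued in `ℝ≥0∞`. -/
def iOmega {K : Type u} [MetricSpace K] (f : K → ℂ) (ε : ℝ≥0∞) : ℝ≥0∞ :=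
  ⨆ (n : ℕ) (_ : (osOmegaSets f ε n).Nonempty), (n : ℝ≥0∞)

/-- The transfinite oscillations `osc_β f`. -/
def oscOrd {K : Type u} [MetricSpace K] (f : K → ℂ) (β : Ordinal.{v}) : K → ℝ≥0∞ :=
  Ordinal.limitRecOn β (fun _ => 0)
    (fun _ ih => uscEnvWithin Set.univ (toscSuccWithin f Set.univ ih))
    (fun γ _ ih => uscEnvWithin Set.univ (fun x => ⨆ (α : Ordinal) (h : α < γ), ih α h x))

/-- The weight of a topological space: least cardinality of a basis. -/
def tweight (K : Type u) [TopologicalSpace K] : Cardinal.{u} :=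
  ⨅ (B : Set (Set K)) (_ : TopologicalSpace.IsTopologicalBasis B), Cardinal.mk B

/-- `f` belongs to `B_{1/4}(K)`. -/
def MemB14 {K : Type u} [MetricSpace K] (f : K → ℂ) : Prop :=
  ∃ (g : ℕ → K → ℂ) (lam : ℝ≥0∞), lam < ⊤ ∧
    (∀ n, MemD (g n) ∧ DNorm (g n) ≤ lam) ∧ TendstoUniformly g f atTop

/-- The `B_{1/4}`-norm of `f`. -/
def B14Norm {K : Type u} [MetricSpace K] (f : K → ℂ) : ℝ≥0∞ :=
  ⨅ (lam : ℝ≥0∞) (_ : ∃ g : ℕ → K → ℂ,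
    (∀ n, MemD (g n) ∧ DNorm (g n) ≤ lam) ∧ TendstoUniformly g f atTop), lam

/-- `f` belongs to `SD(K)`: the closure in `D`-norm of the simple `D`-functions. -/
def MemSD {K : Type u} [MetricSpace K] (f : K → ℂ) : Prop :=
  MemD f ∧ ∀ ε : ℝ≥0∞, 0 < ε →
    ∃ φ : K → ℂ, (Set.range φ).Finite ∧ MemD φ ∧ DNorm (f - φ) < ε

/-- The algebra of sets generated by the open subsets of `K`. -/
inductive DAlg (K : Type u) [TopologicalSpace K] : Set K → Prop
  | basic (U : Set K) : IsOpen U → DAlg K U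
  | compl (A : Set K) : DAlg K A → DAlg K Aᶜ
  | union (A B : Set K) : DAlg K A → DAlg K B → DAlg K (A ∪ B)

/-- `W` is a difference of two closed sets. -/
def IsDCS {K : Type u} [TopologicalSpace K] (W : Set K) : Prop :=
  ∃ A B : Set K, IsClosed A ∧ IsClosed B ∧ W = A \ B

/-- The boundary of `A ∩ L` relative to the subspace `L`. -/
def relBoundary {K : Type u} [TopologicalSpace K] (L A : Set K) : Set K :=
  L ∩ closure (A ∩ L) ∩ closure (L \ A)

/-- The iterated boundaries `∂^n A` (with `∂^0 A = K`). -/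
def iterBoundary {K : Type u} [TopologicalSpace K] (A : Set K) : ℕ → Set K
  | 0 => Set.univ
  | n + 1 => relBoundary (iterBoundary A n) A

/-- The Baire index `i(A)` of a set: the largest `n` with `∂^n A ≠ ∅`. -/
def setIndex {K : Type u} [TopologicalSpace K] (A : Set K) : ℕ∞ :=
  ⨆ (n : ℕ) (_ : (iterBoundary A n).Nonempty), (n : ℕ∞)

/-- The iterated derived sets `K^{(n)}` of the space `K`. -/
def derivedIter (K : Type u) [TopologicalSpace K] : ℕ → Set K
  | 0 => Set.univ
  | n + 1 => {x | AccPt x (Filter.principal (derivedIter K n))}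

end

/-!
Write `osc_m = oscN f m` and `os_j = osSets f (fun _ => ε) j`. By induction on `j`, at points
outside `os_{j+1}` one step of the oscillation recursion adds at most `(j + 1) ε` to `osc_m`
(`m ≥ j`). Finite Baire index `n` means `os_{n+1} = ∅` for every `ε > 0`, so
`osc_{n+1} ≤ osc_n + (n + 1) ε` everywhere and hence `osc_n = osc_{n+1}`.

Then `u = osc_n f` satisfies `limsup_{y → x} (|f y - f x| + u y) ≤ u x`, which makes `u ± Re f`
upper semicontinuous. For real `f` with `|f| + u ≤ λ`, `f` is the difference of the nonnegative
lower semicontinuous functions `(λ - u ± f) / 2`, each a series of nonnegative continuous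
functions (increments of Lipschitz inf-convolutions); this gives `‖f‖_D ≤ λ`. For `‖f‖_{qD}`,
first subtract a continuous function squeezed between `f + u - λ` and `f - u + λ`.
-/

section Limsup

variable {α γ : Type*}

theorem le_limsup_of_pure_le [CompleteLattice γ] {F : Filter α} {a : α} (h : pure a ≤ F)
    (u : α → γ) : u a ≤ limsup u F :=
  le_limsup_of_frequently_le' <|
    (frequently_pure (p := fun x => u a ≤ u x)).2 le_rfl |>.filter_mono h

theorem upperSemicontinuous_limsup_nhdsWithin [TopologicalSpace α] [CompleteLinearOrder γ]
    [DenselyOrdered γ] (s : Set α) (u : α → γ) :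
    UpperSemicontinuous fun x => limsup u (𝓝[s] x) := by
  intro x c hc
  obtain ⟨c', hc', hc'c⟩ := exists_between hc
  have hlt := eventually_nhdsWithin_iff.1 (eventually_lt_of_limsup_lt hc')
  filter_upwards [hlt.eventually_nhds] with y hy
  exact (limsup_le_of_le (by isBoundedDefault)
    ((eventually_nhdsWithin_iff.2 hy).mono fun z hz => hz.le)).trans_lt hc'c

theorem ENNReal.limsup_add_le_add_limsup (F : Filter α) (u v : α → ℝ≥0∞) :
    limsup (u + v) F ≤ limsup u F + limsup v F := by
  refine ENNReal.le_of_forall_pos_le_add fun δ hδ hfin => ?_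
  have hδ2 : (δ / 2 : ℝ≥0∞) ≠ 0 := by simpa using hδ.ne'
  obtain ⟨hu, hv⟩ := ENNReal.add_lt_top.1 hfin
  refine limsup_le_of_le (by isBoundedDefault) ?_
  filter_upwards [eventually_lt_of_limsup_lt (ENNReal.lt_add_right hu.ne hδ2),
    eventually_lt_of_limsup_lt (ENNReal.lt_add_right hv.ne hδ2)] with x hux hvx
  calc u x + v x ≤ (limsup u F + δ / 2) + (limsup v F + δ / 2) := add_le_add hux.le hvx.le
    _ = limsup u F + limsup v F + δ := by rw [add_add_add_comm, ENNReal.add_halves]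

theorem UpperSemicontinuous.limsup_le_add_of_eventually_le [TopologicalSpace α] {g u : α → ℝ≥0∞}
    {x : α} {c : ℝ≥0∞} (hg : UpperSemicontinuous g) (h : ∀ᶠ y in 𝓝 x, u y ≤ g y + c) :
    limsup u (𝓝 x) ≤ g x + c :=
  calc limsup u (𝓝 x) ≤ limsup (fun y => g y + c) (𝓝 x) := limsup_le_limsup h
    _ = limsup g (𝓝 x) + c := limsup_add_const _ _ _ (by isBoundedDefault) (by isBoundedDefault)
    _ ≤ g x + c := by gcongr; exact hg.limsup_le x

end Limsup

section Oscillation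

variable {K : Type*} [MetricSpace K] {f : K → ℂ}

theorem uscEnvWithin_eq_limsup (L : Set K) (g : K → ℝ≥0∞) (x : K) :
    uscEnvWithin L g x = limsup g (𝓝[L] x) :=
  (((𝓝 x).basis_sets.inf_principal L).limsup_eq_iInf_iSup).symm

theorem toscSuccWithin_eq_limsup (f : K → ℂ) (L : Set K) (g : K → ℝ≥0∞) (x : K) :
    toscSuccWithin f L g x = limsup (fun y => ‖f y - f x‖ₑ + g y) (𝓝[L] x) :=
  (((𝓝 x).basis_sets.inf_principal L).limsup_eq_iInf_iSup).symm

theorem toscSuccWithin_univ (f : K → ℂ) (g : K → ℝ≥0∞) (x : K) :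
    toscSuccWithin f univ g x = limsup (fun y => ‖f y - f x‖ₑ + g y) (𝓝 x) := by
  rw [toscSuccWithin_eq_limsup, nhdsWithin_univ]

theorem oscN_succ (f : K → ℂ) (m : ℕ) :
    oscN f (m + 1) = fun x => limsup (toscSuccWithin f univ (oscN f m)) (𝓝 x) := by
  funext x
  rw [oscN, oscNWithin, uscEnvWithin_eq_limsup, nhdsWithin_univ]
  rfl

theorem le_toscSuccWithin_univ (f : K → ℂ) (g : K → ℝ≥0∞) (x : K) :
    g x ≤ toscSuccWithin f univ g x := by
  rw [toscSuccWithin_univ]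
  simpa using le_limsup_of_pure_le (pure_le_nhds x) (fun y => ‖f y - f x‖ₑ + g y)

theorem toscSuccWithin_le_oscN_succ (f : K → ℂ) (m : ℕ) (x : K) :
    toscSuccWithin f univ (oscN f m) x ≤ oscN f (m + 1) x := by
  rw [oscN_succ]
  exact le_limsup_of_pure_le (pure_le_nhds x) _

theorem oscN_le_oscN_succ (f : K → ℂ) (m : ℕ) (x : K) : oscN f m x ≤ oscN f (m + 1) x :=
  (le_toscSuccWithin_univ f _ x).trans (toscSuccWithin_le_oscN_succ f m x)

theorem upperSemicontinuous_oscN (f : K → ℂ) : ∀ m, UpperSemicontinuous (oscN f m)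
  | 0 => upperSemicontinuous_const
  | m + 1 => by
    rw [oscN_succ]
    simpa only [nhdsWithin_univ] using upperSemicontinuous_limsup_nhdsWithin univ _

theorem toscSuccWithin_le_add_of_eventually {g : K → ℝ≥0∞} {x : K} {e : ℝ≥0∞}
    (hg : UpperSemicontinuous g) (h : ∀ᶠ y in 𝓝 x, ‖f y - f x‖ₑ ≤ e) :
    toscSuccWithin f univ g x ≤ g x + e := by
  rw [toscSuccWithin_univ]
  exact hg.limsup_le_add_of_eventually_le (h.mono fun y hy => by rw [add_comm]; gcongr)

theorem oscN_succ_le_add_of_isOpen {m : ℕ} {W : Set K} {c : ℝ≥0∞} (hW : IsOpen W)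
    (h : ∀ z ∈ W, toscSuccWithin f univ (oscN f m) z ≤ oscN f m z + c) {y : K} (hy : y ∈ W) :
    oscN f (m + 1) y ≤ oscN f m y + c := by
  rw [oscN_succ]
  exact (upperSemicontinuous_oscN f m).limsup_le_add_of_eventually_le
    (eventually_of_mem (hW.mem_nhds hy) h)

theorem toscSuccWithin_le_max_of_eventually {g g' : K → ℝ≥0∞} {M : Set K} {x : K}
    {e c : ℝ≥0∞} (hg : UpperSemicontinuous g)
    (h : ∀ᶠ y in 𝓝 x, (y ∈ M → ‖f y - f x‖ₑ ≤ e) ∧ (y ∉ M → g y ≤ g' y + c)) :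
    toscSuccWithin f univ g x ≤ max (g x + e) (toscSuccWithin f univ g' x + c) := by
  rw [toscSuccWithin_univ, toscSuccWithin_univ]
  calc limsup (fun y => ‖f y - f x‖ₑ + g y) (𝓝 x)
      ≤ limsup (fun y => max (g y + e) ((‖f y - f x‖ₑ + g' y) + c)) (𝓝 x) := by
        refine limsup_le_limsup (h.mono fun y hy => ?_)
        by_cases hyM : y ∈ M
        · exact le_max_of_le_left ((add_comm _ _).trans_le (add_le_add le_rfl (hy.1 hyM)))
        · exact le_max_of_le_right ((add_le_add le_rfl (hy.2 hyM)).trans_eq (add_assoc _ _ _).symm)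
    _ = max (limsup (fun y => g y + e) (𝓝 x))
          (limsup (fun y => (‖f y - f x‖ₑ + g' y) + c) (𝓝 x)) := limsup_max
    _ ≤ max (g x + e) (limsup (fun y => ‖f y - f x‖ₑ + g' y) (𝓝 x) + c) := by
        gcongr
        · exact hg.limsup_le_add_of_eventually_le (Eventually.of_forall fun _ => le_rfl)
        · exact (limsup_add_const _ _ _ (by isBoundedDefault) (by isBoundedDefault)).le

end Oscillation

section OscillationSets

variable {K : Type*} [MetricSpace K] {f : K → ℂ}

theorem isClosed_osSets (f : K → ℂ) (ε : ℕ → ℝ) : ∀ j, IsClosed (osSets f ε j)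
  | 0 => isClosed_univ
  | j + 1 => by
    have husc : UpperSemicontinuous (oscWithin f (osSets f ε j)) := by
      show UpperSemicontinuous fun x => uscEnvWithin _ _ x
      simpa only [uscEnvWithin_eq_limsup] using upperSemicontinuous_limsup_nhdsWithin _ _
    exact (isClosed_osSets f ε j).inter (husc.isClosed_preimage _)

theorem eventually_enorm_sub_le_of_notMem_osSets_succ {ε : ℕ → ℝ} {j : ℕ} {x : K}
    (hx : x ∈ osSets f ε j) (hx' : x ∉ osSets f ε (j + 1)) :
    ∀ᶠ y in 𝓝[osSets f ε j] x, ‖f y - f x‖ₑ ≤ ENNReal.ofReal (ε j) := by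
  have hlt : oscWithin f (osSets f ε j) x < ENNReal.ofReal (ε j) :=
    lt_of_not_ge fun h => hx' ⟨hx, h⟩
  rw [oscWithin, oscNWithin, uscEnvWithin_eq_limsup] at hlt
  have h := (le_limsup_of_pure_le (pure_le_nhdsWithin hx) _).trans_lt hlt
  rw [toscSuccWithin_eq_limsup] at h
  exact (eventually_lt_of_limsup_lt h).mono fun y hy => by simpa [oscNWithin] using hy.le

/-- At `x ∈ os_j \ os_{j+1}`, points `y ∈ os_j` near `x` have `‖f y - f x‖ ≤ ε`, and off the
closed set `os_j` the induction hypothesis gives `osc_{m+1} ≤ osc_m + j ε`. -/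
theorem toscSuccWithin_oscN_le_of_notMem_osSets (f : K → ℂ) (ε : ℝ) :
    ∀ j m, j ≤ m → ∀ x ∉ osSets f (fun _ => ε) (j + 1),
      toscSuccWithin f univ (oscN f m) x ≤ oscN f m x + (j + 1) * ENNReal.ofReal ε := by
  intro j
  induction j with
  | zero =>
    intro m _ x hx
    have h := eventually_enorm_sub_le_of_notMem_osSets_succ (mem_univ x) hx
    rw [osSets, nhdsWithin_univ] at h
    simpa using toscSuccWithin_le_add_of_eventually (upperSemicontinuous_oscN f m) h
  | succ i ih =>
    intro m hm x hx
    have hmono : ((i : ℝ≥0∞) + 1) * ENNReal.ofReal ε ≤ ((i + 1 : ℕ) + 1) * ENNReal.ofReal ε := by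
      gcongr; exact le_self_add
    by_cases hx1 : x ∈ osSets f (fun _ => ε) (i + 1)
    swap
    · exact (ih m (by omega) x hx1).trans (add_le_add le_rfl hmono)
    obtain ⟨m, rfl⟩ : ∃ m', m = m' + 1 := ⟨m - 1, by omega⟩
    have hopen := (isClosed_osSets f (fun _ => ε) (i + 1)).isOpen_compl
    have hsmall := eventually_nhdsWithin_iff.1
      (eventually_enorm_sub_le_of_notMem_osSets_succ hx1 hx)
    have houter : ∀ y ∉ osSets f (fun _ => ε) (i + 1),
        oscN f (m + 1) y ≤ oscN f m y + (i + 1) * ENNReal.ofReal ε :=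
      fun y hy => oscN_succ_le_add_of_isOpen hopen (fun z hz => ih m (by omega) z hz) hy
    refine (toscSuccWithin_le_max_of_eventually (upperSemicontinuous_oscN f (m + 1))
      (hsmall.mono fun y hy => ⟨hy, houter y⟩)).trans (max_le ?_ ?_)
    · gcongr
      exact le_mul_of_one_le_left' le_add_self
    · exact add_le_add (toscSuccWithin_le_oscN_succ f m x) hmono


theorem osSets_eq_empty_of_baireIndexTotal_eq {n : ℕ} (hn : baireIndexTotal f = n) {ε : ℝ}
    (hε : 0 < ε) : osSets f (fun _ => ε) (n + 1) = ∅ := by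
  refine eq_empty_iff_forall_notMem.2 fun x hx => ?_
  have h : ((n + 1 : ℕ) : ℕ∞) ≤ baireIndexTotal f :=
    le_iSup₂_of_le ε hε (le_iSup₂_of_le (n + 1) ⟨x, hx⟩ le_rfl)
  rw [hn, Nat.cast_le] at h
  omega

theorem oscN_eq_oscN_succ_of_baireIndexTotal_eq {n : ℕ} (hn : baireIndexTotal f = n) :
    oscN f n = oscN f (n + 1) := by
  refine funext fun x => le_antisymm (oscN_le_oscN_succ f n x) ?_
  refine ENNReal.le_of_forall_pos_le_add fun δ hδ _ => ?_
  have hε : (0 : ℝ) < δ / (n + 1) := by positivity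
  have hstep : ∀ z ∈ univ, toscSuccWithin f univ (oscN f n) z
      ≤ oscN f n z + (n + 1) * ENNReal.ofReal (δ / (n + 1)) := fun z _ =>
    toscSuccWithin_oscN_le_of_notMem_osSets f _ n n le_rfl z
      (by simp [osSets_eq_empty_of_baireIndexTotal_eq hn hε])
  have hδ : ((n : ℝ≥0∞) + 1) * ENNReal.ofReal (δ / (n + 1)) = δ := by
    rw [← ENNReal.ofReal_natCast, ← ENNReal.ofReal_one,
      ← ENNReal.ofReal_add (by positivity) zero_le_one, ← ENNReal.ofReal_mul (by positivity),
      mul_div_cancel₀ _ (by positivity), ENNReal.ofReal_coe_nnreal]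
  exact (oscN_succ_le_add_of_isOpen isOpen_univ hstep (mem_univ x)).trans_eq (by rw [hδ])

end OscillationSets

section OscillationBounds

variable {K : Type*} [MetricSpace K]

theorem oscN_one_le (f : K → ℂ) (x : K) : oscN f 1 x ≤ 2 * ⨆ k, ‖f k‖ₑ := by
  have hS : ∀ y z, ‖f z - f y‖ₑ + oscN f 0 z ≤ 2 * ⨆ k, ‖f k‖ₑ := fun y z =>
    calc ‖f z - f y‖ₑ + 0 ≤ ‖f z‖ₑ + ‖f y‖ₑ := by rw [add_zero]; exact enorm_sub_le
      _ ≤ (⨆ k, ‖f k‖ₑ) + ⨆ k, ‖f k‖ₑ :=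
        add_le_add (le_iSup (fun k => ‖f k‖ₑ) z) (le_iSup (fun k => ‖f k‖ₑ) y)
      _ = 2 * ⨆ k, ‖f k‖ₑ := (two_mul _).symm
  rw [oscN_succ]
  refine limsup_le_iSup.trans (iSup_le fun y => ?_)
  rw [toscSuccWithin_univ]
  exact limsup_le_iSup.trans (iSup_le (hS y))

theorem toscSuccWithin_oscN_le_add (f : K → ℂ) (m : ℕ) (y : K) :
    toscSuccWithin f univ (oscN f m) y ≤ oscN f 1 y + oscN f m y := by
  have h1 : limsup (fun z => ‖f z - f y‖ₑ) (𝓝 y) ≤ oscN f 1 y := by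
    simpa [toscSuccWithin_univ, oscN, oscNWithin] using toscSuccWithin_le_oscN_succ f 0 y
  rw [toscSuccWithin_univ]
  exact (ENNReal.limsup_add_le_add_limsup _ (fun z => ‖f z - f y‖ₑ) (oscN f m)).trans
    (add_le_add h1 ((upperSemicontinuous_oscN f m).limsup_le y))

theorem oscN_le_mul_oscN_one (f : K → ℂ) : ∀ m x, oscN f m x ≤ m * oscN f 1 x
  | 0, x => by simp [oscN, oscNWithin]
  | m + 1, x => by
    rw [oscN_succ]
    calc limsup (toscSuccWithin f univ (oscN f m)) (𝓝 x)
        ≤ limsup (oscN f 1 + oscN f m) (𝓝 x) :=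
          limsup_le_limsup (Eventually.of_forall (toscSuccWithin_oscN_le_add f m))
      _ ≤ oscN f 1 x + oscN f m x :=
          (ENNReal.limsup_add_le_add_limsup _ _ _).trans <|
            add_le_add ((upperSemicontinuous_oscN f 1).limsup_le x)
              ((upperSemicontinuous_oscN f m).limsup_le x)
      _ ≤ oscN f 1 x + m * oscN f 1 x := add_le_add le_rfl (oscN_le_mul_oscN_one f m x)
      _ = ((m + 1 : ℕ) : ℝ≥0∞) * oscN f 1 x := by push_cast; ring

end OscillationBounds

section LowerSemicontinuousSeries

variable {X : Type*} [PseudoMetricSpace X]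

/-- The Pasch–Hausdorff envelope of `min h m`; the truncation makes the sequence start at `0`. -/
noncomputable def lipschitzApprox (h : X → ℝ) (m : ℕ) (x : X) : ℝ :=
  ⨅ y, (min (h y) m + m * dist x y)

variable {h : X → ℝ}

theorem bddBelow_lipschitzApprox (h0 : 0 ≤ h) (m : ℕ) (x : X) :
    BddBelow (range fun y => min (h y) m + m * dist x y) :=
  ⟨0, forall_mem_range.2 fun y => add_nonneg (le_min (h0 y) m.cast_nonneg) (by positivity)⟩

theorem lipschitzApprox_zero (h0 : 0 ≤ h) : lipschitzApprox h 0 = 0 := by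
  have hmin : ∀ y, min (h y) 0 = 0 := fun y => min_eq_right (h0 y)
  funext x
  simp [lipschitzApprox, hmin]

theorem lipschitzApprox_le (h0 : 0 ≤ h) (m : ℕ) (x : X) : lipschitzApprox h m x ≤ h x :=
  (ciInf_le (bddBelow_lipschitzApprox h0 m x) x).trans (by simp)

section Nonempty

variable [Nonempty X]

theorem monotone_lipschitzApprox (h0 : 0 ≤ h) : Monotone (lipschitzApprox h) :=
  monotone_nat_of_le_succ fun m x => le_ciInf fun y =>
    (ciInf_le (bddBelow_lipschitzApprox h0 m x) y).trans (by push_cast; gcongr <;> simp)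

theorem lipschitzWith_lipschitzApprox (h0 : 0 ≤ h) (m : ℕ) :
    LipschitzWith m (lipschitzApprox h m) := by
  refine LipschitzWith.of_le_add_mul m fun x x' => ?_
  rw [← sub_le_iff_le_add]
  refine le_ciInf fun y => ?_
  rw [sub_le_iff_le_add]
  calc lipschitzApprox h m x ≤ min (h y) m + m * dist x y :=
        ciInf_le (bddBelow_lipschitzApprox h0 m x) y
    _ ≤ min (h y) m + m * dist x' y + m * dist x x' := by
        rw [add_assoc, ← mul_add, add_comm (dist x' y)]
        gcongr
        exact dist_triangle x x' y

theorem tendsto_lipschitzApprox (hh : LowerSemicontinuous h) (h0 : 0 ≤ h) (x : X) :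
    Tendsto (fun m => lipschitzApprox h m x) atTop (𝓝 (h x)) := by
  refine tendsto_order.2 ⟨fun c hc => ?_, fun c hc =>
    Eventually.of_forall fun m => (lipschitzApprox_le h0 m x).trans_lt hc⟩
  obtain ⟨c', hcc', hc'⟩ := exists_between hc
  obtain ⟨r, hr, hball⟩ := Metric.eventually_nhds_iff.1 (hh x c' hc')
  filter_upwards [tendsto_natCast_atTop_atTop.eventually_ge_atTop (max c' (c' / r))] with m hm
  refine hcc'.trans_le (le_ciInf fun y => ?_)
  have hmr : c' ≤ m * r := (div_le_iff₀ hr).1 (le_of_max_le_right hm)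
  by_cases hy : dist y x < r
  · have hmin : c' ≤ min (h y) m := le_min (hball hy).le (le_of_max_le_left hm)
    nlinarith [dist_nonneg (x := x) (y := y)]
  · have hmin : (0 : ℝ) ≤ min (h y) m := le_min (h0 y) m.cast_nonneg
    have hry : r ≤ dist x y := dist_comm x y ▸ not_lt.1 hy
    nlinarith [mul_le_mul_of_nonneg_left hry m.cast_nonneg]

end Nonempty

theorem LowerSemicontinuous.exists_hasSum_continuous (hh : LowerSemicontinuous h) (h0 : 0 ≤ h) :
    ∃ ψ : ℕ → X → ℝ, (∀ j, Continuous (ψ j)) ∧ (∀ j x, 0 ≤ ψ j x) ∧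
      ∀ x, HasSum (fun j => ψ j x) (h x) := by
  rcases isEmpty_or_nonempty X with hX | hX
  · exact ⟨0, fun _ => continuous_const, fun _ _ => le_rfl, isEmptyElim⟩
  set a := lipschitzApprox h
  have hψ0 : ∀ j x, 0 ≤ a (j + 1) x - a j x := fun j x =>
    sub_nonneg.2 (monotone_lipschitzApprox h0 j.le_succ x)
  have hc : ∀ m, Continuous (a m) := fun m => (lipschitzWith_lipschitzApprox h0 m).continuous
  refine ⟨fun j x => a (j + 1) x - a j x, fun j => (hc _).sub (hc _),
    hψ0, fun x => (hasSum_iff_tendsto_nat_of_nonneg (fun j => hψ0 j x) _).2 ?_⟩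
  simpa [Finset.sum_range_sub (fun m => a m x), a, lipschitzApprox_zero h0]
    using tendsto_lipschitzApprox hh h0 x

end LowerSemicontinuousSeries

theorem exists_continuous_between {X : Type*} [TopologicalSpace X] [NormalSpace X]
    [ParacompactSpace X] {low up : X → ℝ} (hlow : UpperSemicontinuous low)
    (hup : LowerSemicontinuous up) (hlt : ∀ x, low x < up x) :
    ∃ φ : X → ℝ, Continuous φ ∧ ∀ x, low x ≤ φ x ∧ φ x ≤ up x := by
  obtain ⟨φ, hφ⟩ := exists_continuous_forall_mem_convex_of_local_const
    (t := fun x => Icc (low x) (up x)) (fun x => convex_Icc _ _) fun x => by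
      obtain ⟨c, hlc, hcu⟩ := exists_between (hlt x)
      exact ⟨c, ((hlow x c hlc).and (hup x c hcu)).mono fun y hy => ⟨hy.1.le, hy.2.le⟩⟩
  exact ⟨φ, φ.continuous, hφ⟩

theorem Complex.enorm_ofReal (r : ℝ) : ‖(r : ℂ)‖ₑ = ‖r‖ₑ := by
  rw [enorm_eq_nnnorm, enorm_eq_nnnorm, Complex.nnnorm_real]

section DFunctions

variable {K : Type*} [MetricSpace K] {f g : K → ℂ}

theorem memD_of_dNorm_lt_top (h : DNorm f < ⊤) : MemD f := by
  simpa only [MemD, DNorm, iInf_lt_iff, exists_prop] using h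

theorem dBound_add_le (φ ψ : ℕ → K → ℂ) : DBound (φ + ψ) ≤ DBound φ + DBound ψ :=
  iSup_le fun k => (ENNReal.tsum_le_tsum fun _ => enorm_add_le _ _).trans <|
    ENNReal.tsum_add.trans_le <| add_le_add (le_iSup (fun k => ∑' j, ‖φ j k‖ₑ) k)
      (le_iSup (fun k => ∑' j, ‖ψ j k‖ₑ) k)

theorem MemD.add (hf : MemD f) (hg : MemD g) : MemD (f + g) := by
  obtain ⟨φ, hφ, hφb⟩ := hf
  obtain ⟨ψ, hψ, hψb⟩ := hg
  exact ⟨φ + ψ, ⟨fun j => (hφ.1 j).add (hψ.1 j), fun k => (hφ.2 k).add (hψ.2 k)⟩,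
    (dBound_add_le φ ψ).trans_lt (ENNReal.add_lt_top.2 ⟨hφb, hψb⟩)⟩

theorem MemD.const_mul (c : ℂ) (hf : MemD f) : MemD fun k => c * f k := by
  obtain ⟨φ, hφ, hφb⟩ := hf
  refine ⟨fun j k => c * φ j k,
    ⟨fun j => continuous_const.mul (hφ.1 j), fun k => (hφ.2 k).mul_left c⟩, ?_⟩
  have h : DBound (fun j k => c * φ j k) = ‖c‖ₑ * DBound φ := by
    simp only [DBound, ← enorm_eq_nnnorm, enorm_mul, ENNReal.tsum_mul_left, ENNReal.mul_iSup]
  exact h ▸ ENNReal.mul_lt_top enorm_lt_top hφb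

theorem exists_isDRep_of_eq_sub {g h₁ h₂ : K → ℝ} (hg : ∀ x, g x = h₁ x - h₂ x)
    (hh₁ : LowerSemicontinuous h₁) (hh₂ : LowerSemicontinuous h₂) (h₁0 : 0 ≤ h₁) (h₂0 : 0 ≤ h₂) :
    ∃ φ, IsDRep (fun x => (g x : ℂ)) φ ∧
      ∀ x, ∑' j, ‖φ j x‖ₑ ≤ ENNReal.ofReal (h₁ x + h₂ x) := by
  obtain ⟨ψ₁, hc₁, hψ₁0, hs₁⟩ := hh₁.exists_hasSum_continuous h₁0
  obtain ⟨ψ₂, hc₂, hψ₂0, hs₂⟩ := hh₂.exists_hasSum_continuous h₂0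
  refine ⟨fun j x => ((ψ₁ j x - ψ₂ j x : ℝ) : ℂ),
    ⟨fun j => Complex.continuous_ofReal.comp ((hc₁ j).sub (hc₂ j)), fun x => ?_⟩, fun x => ?_⟩
  · exact Complex.hasSum_ofReal.2 (hg x ▸ (hs₁ x).sub (hs₂ x))
  have hterm : ∀ j, ‖((ψ₁ j x - ψ₂ j x : ℝ) : ℂ)‖ₑ
      ≤ ENNReal.ofReal (ψ₁ j x) + ENNReal.ofReal (ψ₂ j x) := fun j => by
    rw [Complex.enorm_ofReal, Real.enorm_eq_ofReal_abs, ← ENNReal.ofReal_add (hψ₁0 j x) (hψ₂0 j x)]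
    exact ENNReal.ofReal_le_ofReal ((abs_sub _ _).trans (by
      rw [abs_of_nonneg (hψ₁0 j x), abs_of_nonneg (hψ₂0 j x)]))
  calc ∑' j, ‖((ψ₁ j x - ψ₂ j x : ℝ) : ℂ)‖ₑ
      ≤ ∑' j, (ENNReal.ofReal (ψ₁ j x) + ENNReal.ofReal (ψ₂ j x)) := ENNReal.tsum_le_tsum hterm
    _ = ENNReal.ofReal (h₁ x + h₂ x) := by
      rw [ENNReal.tsum_add, ← ENNReal.ofReal_tsum_of_nonneg (hψ₁0 · x) (hs₁ x).summable,
        ← ENNReal.ofReal_tsum_of_nonneg (hψ₂0 · x) (hs₂ x).summable, (hs₁ x).tsum_eq,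
        (hs₂ x).tsum_eq, ENNReal.ofReal_add (h₁0 x) (h₂0 x)]

/-- `g = (λ - (v - g)) / 2 - (λ - (v + g)) / 2` is a difference of nonnegative lower
semicontinuous functions. -/
theorem dNorm_ofReal_le {g v : K → ℝ} {lam : ℝ} (hadd : UpperSemicontinuous fun x => v x + g x)
    (hsub : UpperSemicontinuous fun x => v x - g x) (hv : ∀ x, 0 ≤ v x)
    (hlam : ∀ x, |g x| + v x ≤ lam) : DNorm (fun x => (g x : ℂ)) ≤ ENNReal.ofReal lam := by
  have hanti : Antitone fun t : ℝ => (lam - t) / 2 := fun a b hab => by dsimp; linarith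
  have hcont : Continuous fun t : ℝ => (lam - t) / 2 := by fun_prop
  obtain ⟨φ, hφ, hφb⟩ := exists_isDRep_of_eq_sub (g := g)
    (h₁ := fun x => (lam - (v x - g x)) / 2) (h₂ := fun x => (lam - (v x + g x)) / 2)
    (fun x => by ring) (hcont.comp_upperSemicontinuous_antitone hsub hanti)
    (hcont.comp_upperSemicontinuous_antitone hadd hanti)
    (fun x => by dsimp; linarith [hlam x, neg_abs_le (g x)])
    (fun x => by dsimp; linarith [hlam x, le_abs_self (g x)])
  refine (iInf₂_le φ hφ).trans (iSup_le fun x => (hφb x).trans (ENNReal.ofReal_le_ofReal ?_))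
  linarith [hv x, hlam x, abs_nonneg (g x)]

end DFunctions

section OscMajorant

variable {K : Type*} [MetricSpace K] {f g : K → ℂ} {u : K → ℝ≥0∞}

def IsOscMajorant (f : K → ℂ) (u : K → ℝ≥0∞) : Prop :=
  ∀ x, toscSuccWithin f univ u x ≤ u x

theorem isOscMajorant_oscN {n : ℕ} (h : oscN f n = oscN f (n + 1)) :
    IsOscMajorant f (oscN f n) :=
  fun x => (toscSuccWithin_le_oscN_succ f n x).trans_eq (congrFun h x).symm

theorem IsOscMajorant.of_enorm_sub_le (hf : IsOscMajorant f u)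
    (hgf : ∀ x y, ‖g y - g x‖ₑ ≤ ‖f y - f x‖ₑ) : IsOscMajorant g u := fun x => by
  refine le_trans ?_ (hf x)
  rw [toscSuccWithin_univ, toscSuccWithin_univ]
  exact limsup_le_limsup (Eventually.of_forall fun y => add_le_add (hgf x y) le_rfl)

theorem IsOscMajorant.neg (hf : IsOscMajorant f u) : IsOscMajorant (-f) u :=
  hf.of_enorm_sub_le fun x y => by rw [Pi.neg_apply, Pi.neg_apply, neg_sub_neg, enorm_sub_rev]

theorem IsOscMajorant.sub_continuous (hf : IsOscMajorant f u) {φ : K → ℂ} (hφ : Continuous φ) :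
    IsOscMajorant (f - φ) u := fun x => by
  have hφx : Tendsto (fun y => ‖φ y - φ x‖ₑ) (𝓝 x) (𝓝 0) := by
    simpa [edist_eq_enorm_sub] using (hφ.tendsto x).edist (tendsto_const_nhds (x := φ x))
  have hterm : ∀ y, ‖(f - φ) y - (f - φ) x‖ₑ + u y ≤ (‖f y - f x‖ₑ + u y) + ‖φ y - φ x‖ₑ := by
    intro y
    calc ‖(f - φ) y - (f - φ) x‖ₑ + u y = ‖(f y - f x) - (φ y - φ x)‖ₑ + u y := by
          rw [Pi.sub_apply, Pi.sub_apply, sub_sub_sub_comm]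
      _ ≤ (‖f y - f x‖ₑ + ‖φ y - φ x‖ₑ) + u y := add_le_add enorm_sub_le le_rfl
      _ = (‖f y - f x‖ₑ + u y) + ‖φ y - φ x‖ₑ := add_right_comm _ _ _
  rw [toscSuccWithin_univ]
  calc limsup (fun y => ‖(f - φ) y - (f - φ) x‖ₑ + u y) (𝓝 x)
      ≤ limsup ((fun y => ‖f y - f x‖ₑ + u y) + fun y => ‖φ y - φ x‖ₑ) (𝓝 x) :=
        limsup_le_limsup (Eventually.of_forall hterm)
    _ ≤ toscSuccWithin f univ u x + 0 := by
        rw [toscSuccWithin_univ, ← hφx.limsup_eq]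
        exact ENNReal.limsup_add_le_add_limsup _ _ _
    _ ≤ u x := (add_zero _).trans_le (hf x)

theorem IsOscMajorant.upperSemicontinuous_toReal_add_re (hf : IsOscMajorant f u)
    (hu : ∀ x, u x ≠ ⊤) : UpperSemicontinuous fun x => (u x).toReal + (f x).re := by
  intro x t ht
  have hδ : 0 < t - ((u x).toReal + (f x).re) := sub_pos.2 ht
  have hlt : toscSuccWithin f univ u x < u x + ENNReal.ofReal (t - ((u x).toReal + (f x).re)) :=
    (hf x).trans_lt (ENNReal.lt_add_right (hu x) (ENNReal.ofReal_pos.2 hδ).ne')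
  rw [toscSuccWithin_univ] at hlt
  filter_upwards [eventually_lt_of_limsup_lt hlt] with y hy
  have hy' := ENNReal.toReal_strict_mono (ENNReal.add_ne_top.2 ⟨hu x, ENNReal.ofReal_ne_top⟩) hy
  rw [ENNReal.toReal_add enorm_ne_top (hu y), ENNReal.toReal_add (hu x) ENNReal.ofReal_ne_top,
    toReal_enorm, ENNReal.toReal_ofReal hδ.le] at hy'
  have hre := Complex.re_le_norm (f y - f x)
  rw [Complex.sub_re] at hre
  linarith

theorem IsOscMajorant.upperSemicontinuous_toReal_sub_re (hf : IsOscMajorant f u)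
    (hu : ∀ x, u x ≠ ⊤) : UpperSemicontinuous fun x => (u x).toReal - (f x).re := by
  simpa [sub_eq_add_neg] using hf.neg.upperSemicontinuous_toReal_add_re hu

theorem IsOscMajorant.dNorm_le_iSup_add (hf : IsOscMajorant f u) (hreal : ∀ k, (f k).im = 0) :
    DNorm f ≤ ⨆ k, (‖f k‖ₑ + u k) := by
  set Λ := ⨆ k, (‖f k‖ₑ + u k)
  rcases eq_or_ne Λ ⊤ with hΛ | hΛ
  · exact hΛ ▸ le_top
  have hle : ∀ k, ‖f k‖ₑ + u k ≤ Λ := le_iSup (fun k => ‖f k‖ₑ + u k)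
  have hu : ∀ k, u k ≠ ⊤ := fun k => ne_top_of_le_ne_top hΛ (le_add_self.trans (hle k))
  have hlam : ∀ k, |(f k).re| + (u k).toReal ≤ Λ.toReal := fun k => by
    have h := ENNReal.toReal_mono hΛ (hle k)
    rw [ENNReal.toReal_add enorm_ne_top (hu k), toReal_enorm] at h
    linarith [Complex.abs_re_le_norm (f k)]
  have hf_eq : f = fun k => ((f k).re : ℂ) := funext fun k => Complex.ext rfl (by simp [hreal k])
  calc DNorm f = DNorm fun k => ((f k).re : ℂ) := by rw [← hf_eq]
    _ ≤ ENNReal.ofReal Λ.toReal :=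
      dNorm_ofReal_le (hf.upperSemicontinuous_toReal_add_re hu)
        (hf.upperSemicontinuous_toReal_sub_re hu) (fun _ => ENNReal.toReal_nonneg) hlam
    _ = Λ := ENNReal.ofReal_toReal hΛ

theorem IsOscMajorant.memD (hf : IsOscMajorant f u) (hfb : ⨆ k, ‖f k‖ₑ ≠ ⊤)
    (hub : ⨆ k, u k ≠ ⊤) : MemD f := by
  have hpart : ∀ g : K → ℝ, (∀ x y, |g y - g x| ≤ ‖f y - f x‖) → (∀ k, |g k| ≤ ‖f k‖) →
      MemD fun k => (g k : ℂ) := by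
    intro g hg hgk
    have hmaj : IsOscMajorant (fun k => (g k : ℂ)) u := hf.of_enorm_sub_le fun x y => by
      rw [← Complex.ofReal_sub, Complex.enorm_ofReal, Real.enorm_eq_ofReal_abs, ← ofReal_norm]
      exact ENNReal.ofReal_le_ofReal (hg x y)
    have hgf : ∀ k, ‖(g k : ℂ)‖ₑ ≤ ‖f k‖ₑ := fun k => by
      rw [Complex.enorm_ofReal, Real.enorm_eq_ofReal_abs, ← ofReal_norm]
      exact ENNReal.ofReal_le_ofReal (hgk k)
    refine memD_of_dNorm_lt_top ((hmaj.dNorm_le_iSup_add fun k => Complex.ofReal_im _).trans_lt ?_)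
    exact (iSup_le fun k => add_le_add ((hgf k).trans (le_iSup (fun k => ‖f k‖ₑ) k))
      (le_iSup u k)).trans_lt (ENNReal.add_lt_top.2 ⟨hfb.lt_top, hub.lt_top⟩)
  have hre := hpart (fun k => (f k).re)
    (fun x y => by simpa using Complex.abs_re_le_norm (f y - f x)) fun k => Complex.abs_re_le_norm _
  have him := hpart (fun k => (f k).im)
    (fun x y => by simpa using Complex.abs_im_le_norm (f y - f x)) fun k => Complex.abs_im_le_norm _
  convert hre.add (him.const_mul Complex.I) using 1
  funext k
  rw [Pi.add_apply, mul_comm, Complex.re_add_im]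

theorem IsOscMajorant.exists_continuous_abs_sub_add_le (hf : IsOscMajorant f u)
    (hu : ∀ x, u x ≠ ⊤) {c : ℝ} (hc : ∀ x, (u x).toReal < c) :
    ∃ φ : K → ℝ, Continuous φ ∧ ∀ x, |(f x).re - φ x| + (u x).toReal ≤ c := by
  obtain ⟨φ, hφc, hφ⟩ := exists_continuous_between
    (low := fun x => (u x).toReal + (f x).re - c) (up := fun x => c - ((u x).toReal - (f x).re))
    ((continuous_sub_right c).comp_upperSemicontinuous (hf.upperSemicontinuous_toReal_add_re hu)
      fun a b hab => by dsimp; linarith)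
    ((continuous_sub_left c).comp_upperSemicontinuous_antitone
      (hf.upperSemicontinuous_toReal_sub_re hu) fun a b hab => by dsimp; linarith)
    fun x => by linarith [hc x]
  refine ⟨φ, hφc, fun x => ?_⟩
  obtain ⟨hlow, hup⟩ := hφ x
  have : |(f x).re - φ x| ≤ c - (u x).toReal := abs_sub_le_iff.2 ⟨by linarith, by linarith⟩
  linarith

theorem IsOscMajorant.qDNorm_le_iSup (hf : IsOscMajorant f u) (hreal : ∀ k, (f k).im = 0)
    (hfb : ∃ C, ∀ k, ‖f k‖ ≤ C) : qDNorm f ≤ ⨆ k, u k := by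
  set U := ⨆ k, u k
  rcases eq_or_ne U ⊤ with hU | hU
  · exact hU ▸ le_top
  have hu : ∀ k, u k ≠ ⊤ := fun k => ne_top_of_le_ne_top hU (le_iSup u k)
  obtain ⟨C, hC⟩ := hfb
  refine ENNReal.le_of_forall_pos_le_add fun δ hδ _ => ?_
  obtain ⟨φ, hφc, hφ⟩ := hf.exists_continuous_abs_sub_add_le hu (c := U.toReal + δ) fun x =>
    (ENNReal.toReal_mono hU (le_iSup u x)).trans_lt (lt_add_of_pos_right _ hδ)
  have hψc : Continuous fun x => (φ x : ℂ) := Complex.continuous_ofReal.comp hφc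
  have hsub : ∀ k, (f - fun x => (φ x : ℂ)) k = (((f k).re - φ k : ℝ) : ℂ) := fun k =>
    Complex.ext (by simp) (by simp [hreal k])
  have hbdd : ∃ C', ∀ k, ‖(φ k : ℂ)‖ ≤ C' := ⟨C + (U.toReal + δ), fun k => by
    have h₁ := abs_le.1 ((le_add_of_nonneg_right ENNReal.toReal_nonneg).trans (hφ k))
    have h₂ := abs_le.1 ((Complex.abs_re_le_norm (f k)).trans (hC k))
    rw [Complex.norm_real, Real.norm_eq_abs]
    exact abs_le.2 ⟨by linarith, by linarith⟩⟩
  calc qDNorm f ≤ DNorm (f - fun x => (φ x : ℂ)) :=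
        iInf₂_le _ ⟨hψc, hbdd⟩
    _ ≤ ⨆ k, (‖(f - fun x => (φ x : ℂ)) k‖ₑ + u k) :=
        (hf.sub_continuous hψc).dNorm_le_iSup_add
          fun k => by rw [hsub]; exact Complex.ofReal_im _
    _ ≤ U + δ := iSup_le fun k => by
        rw [hsub, Complex.enorm_ofReal, Real.enorm_eq_ofReal_abs, ← ENNReal.ofReal_toReal (hu k),
          ← ENNReal.ofReal_add (abs_nonneg _) ENNReal.toReal_nonneg, ← ENNReal.ofReal_toReal hU,
          ← ENNReal.ofReal_coe_nnreal, ← ENNReal.ofReal_add ENNReal.toReal_nonneg δ.coe_nonneg]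
        exact ENNReal.ofReal_le_ofReal (hφ k)

end OscMajorant

/-- a bounded function of finite Baire index `n` belongs to `D(K)`,
`osc_n f = osc_{n+1} f`, and for real-valued `f` the stated norm estimates hold. -/
theorem stmt14 {K : Type u} [MetricSpace K] (f : K → ℂ)
    (hb : ∃ C : ℝ, ∀ k, ‖f k‖ ≤ C) (n : ℕ)
    (hn : baireIndexTotal f = (n : ℕ∞)) :
    MemD f ∧ oscN f n = oscN f (n + 1) ∧
    ((∀ k, (f k).im = 0) →
      DNorm f ≤ ((2 * n + 1 : ℕ) : ℝ≥0∞) * (⨆ k, (‖f k‖₊ : ℝ≥0∞)) ∧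
      qDNorm f ≤ (n : ℝ≥0∞) * (⨆ k, oscN f 1 k) ∧
      (n : ℝ≥0∞) * (⨆ k, oscN f 1 k) ≤ ((2 * n : ℕ) : ℝ≥0∞) * (⨆ k, (‖f k‖₊ : ℝ≥0∞))) := by
  obtain ⟨C, hC⟩ := hb
  set S := ⨆ k, ‖f k‖ₑ
  have hS : S ≠ ⊤ := ne_top_of_le_ne_top ENNReal.ofReal_ne_top <|
    iSup_le fun k => (ofReal_norm (f k)).symm.trans_le (ENNReal.ofReal_le_ofReal (hC k))
  have hstable := oscN_eq_oscN_succ_of_baireIndexTotal_eq hn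
  have hmaj := isOscMajorant_oscN hstable
  have hosc₁ : ⨆ k, oscN f 1 k ≤ 2 * S := iSup_le (oscN_one_le f)
  have hoscₙ : ⨆ k, oscN f n k ≤ n * ⨆ k, oscN f 1 k := iSup_le fun k =>
    (oscN_le_mul_oscN_one f n k).trans (by gcongr; exact le_iSup (fun k => oscN f 1 k) k)
  have hoscₙS : ⨆ k, oscN f n k ≤ n * (2 * S) := hoscₙ.trans (by gcongr)
  refine ⟨hmaj.memD hS (ne_top_of_le_ne_top (by finiteness) hoscₙS), hstable, fun hreal =>
    ⟨?_, (hmaj.qDNorm_le_iSup hreal ⟨C, hC⟩).trans hoscₙ, ?_⟩⟩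
  · calc DNorm f ≤ ⨆ k, (‖f k‖ₑ + oscN f n k) := hmaj.dNorm_le_iSup_add hreal
      _ ≤ S + n * (2 * S) := iSup_le fun k =>
          add_le_add (le_iSup (fun k => ‖f k‖ₑ) k) ((le_iSup (fun k => oscN f n k) k).trans hoscₙS)
      _ = ((2 * n + 1 : ℕ) : ℝ≥0∞) * S := by push_cast; ring
  · calc (n : ℝ≥0∞) * ⨆ k, oscN f 1 k ≤ n * (2 * S) := by gcongr
      _ = ((2 * n : ℕ) : ℝ≥0∞) * S := by push_cast; ring
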